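/- If f is (p+1)-times continuously differentiable with bounded (p+1)-st derivative (|f^{(p+1)}| ≤ M), and K_η is a scaled kernel with compact support in [−η, η] satisfying the moment conditions up to order p, then |(K_η * f)(t) − f(t)| ≤ C · M · η^{p+1} for a constant C depending only on K. -/

import Mathlib

/-!
Substituting `s = t - η u` turns `(K_η * f)(t)` into `∫ K(u) f(t - η u) du`. Expanding `f(t - η u)`
around `t` to order `p`, the Taylor polynomial is a polynomial of degree `≤ p` in `u`, so by the
moment conditions it integrates against `K` to its constant term `f t`. What is left is the
integral of `K` against the Lagrange remainder, which on the support `|u| ≤ 1` of `K` is at most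
`M η^(p+1) / (p+1)!`; hence `C = ‖K‖₁ / (p+1)!` works, and `C > 0` because `‖K‖₁ ≥ |∫ K| = 1`.
-/

open MeasureTheory Set Nat

theorem taylorWithinEval_uIcc_eq_univ {f : ℝ → ℝ} {n : ℕ} {x₀ x : ℝ} (hx : x₀ ≠ x)
    (hf : ContDiffAt ℝ n f x₀) :
    taylorWithinEval f n (uIcc x₀ x) x₀ x = taylorWithinEval f n univ x₀ x := by
  simp only [taylor_within_apply, iteratedDerivWithin_univ]
  refine Finset.sum_congr rfl fun k hk => ?_
  rw [iteratedDerivWithin_eq_iteratedDeriv (uniqueDiffOn_uIcc hx)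
    (hf.of_le (by exact_mod_cast Finset.mem_range_succ_iff.mp hk)) left_mem_uIcc]

theorem abs_sub_taylorWithinEval_univ_le {f : ℝ → ℝ} {n : ℕ} {M : ℝ}
    (hf : ContDiff ℝ (n + 1) f) (hM : ∀ x, |iteratedDeriv (n + 1) f x| ≤ M) (x₀ x : ℝ) :
    |f x - taylorWithinEval f n univ x₀ x| ≤ M * |x - x₀| ^ (n + 1) / (n + 1)! := by
  rcases eq_or_ne x₀ x with rfl | hx
  · simp
  obtain ⟨ξ, -, hξ⟩ := taylor_mean_remainder_lagrange_iteratedDeriv hx hf.contDiffOn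
  rw [← taylorWithinEval_uIcc_eq_univ hx (hf.of_le (by exact_mod_cast n.le_succ)).contDiffAt, hξ,
    abs_div, abs_mul, abs_pow, Nat.abs_cast]
  gcongr
  exact hM ξ

theorem taylorWithinEval_univ_sub_mul (f : ℝ → ℝ) (n : ℕ) (t η u : ℝ) :
    taylorWithinEval f n univ t (t - η * u) =
      ∑ k ∈ Finset.range (n + 1), (k ! : ℝ)⁻¹ * (-η) ^ k * iteratedDeriv k f t * u ^ k := by
  simp only [taylor_within_apply, iteratedDerivWithin_univ, smul_eq_mul]
  refine Finset.sum_congr rfl fun k _ => ?_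
  rw [show t - η * u - t = -η * u by ring, mul_pow]
  ring

theorem integral_scaled_kernel_mul_eq {K f : ℝ → ℝ} {η : ℝ} (hη : 0 < η) (t : ℝ) :
    ∫ s, (1 / η) * K ((t - s) / η) * f s = ∫ u, K u * f (t - η * u) := by
  have hscale := Measure.integral_comp_div (fun u => K u * f (t - η * u)) η
  have hshift := integral_sub_left_eq_self (fun v => K (v / η) * f (t - η * (v / η))) volume t
  simp only [mul_div_cancel₀ _ hη.ne', sub_sub_cancel] at hscale hshift
  rw [abs_of_pos hη, smul_eq_mul] at hscale
  simp_rw [mul_assoc, integral_const_mul, hshift, hscale, one_div, inv_mul_cancel_left₀ hη.ne']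

theorem integral_mul_sum_pow_eq_of_moments {K : ℝ → ℝ} {p : ℕ}
    (hK : ∀ k, Integrable fun u => K u * u ^ k) (h0 : ∫ u, K u = 1)
    (hmom : ∀ r : ℕ, 1 ≤ r → r ≤ p → ∫ u, K u * u ^ r = 0) (c : ℕ → ℝ) :
    ∫ u, K u * ∑ k ∈ Finset.range (p + 1), c k * u ^ k = c 0 := by
  simp_rw [Finset.mul_sum, mul_left_comm (K _)]
  rw [integral_finsetSum _ fun k _ => (hK k).const_mul _]
  simp_rw [integral_const_mul]
  rw [Finset.sum_range_succ', Finset.sum_eq_zero fun k hk => by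
    rw [hmom (k + 1) k.succ_pos (Finset.mem_range.mp hk), mul_zero]]
  simp [h0]

theorem abs_integral_mul_le_of_support_subset {K R : ℝ → ℝ} {S : Set ℝ} {B : ℝ}
    (hK : Integrable K) (hKS : Function.support K ⊆ S) (hR : ∀ u ∈ S, |R u| ≤ B) :
    |∫ u, K u * R u| ≤ (∫ u, |K u|) * B := by
  rw [← integral_mul_const, ← Real.norm_eq_abs]
  refine norm_integral_le_of_norm_le (hK.abs.mul_const B) (Filter.Eventually.of_forall fun u => ?_)
  rw [Real.norm_eq_abs, abs_mul]
  by_cases hu : K u = 0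
  · simp [hu]
  · exact mul_le_mul_of_nonneg_left (hR u (hKS hu)) (abs_nonneg _)

theorem kernel_approximation_error (K : ℝ → ℝ) (p : ℕ)
    (hKc : Continuous K) (hKs : Function.support K ⊆ Set.Icc (-1) 1)
    (h0 : ∫ s, K s = 1)
    (hmom : ∀ r : ℕ, 1 ≤ r → r ≤ p → ∫ s, K s * s ^ r = 0) :
    ∃ C : ℝ, 0 < C ∧ ∀ (η : ℝ), 0 < η → ∀ (f : ℝ → ℝ) (M : ℝ),
      ContDiff ℝ (p + 1) f →
      (∀ x, |iteratedDeriv (p + 1) f x| ≤ M) →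
      ∀ t : ℝ, |(∫ s, (1 / η) * K ((t - s) / η) * f s) - f t| ≤ C * M * η ^ (p + 1) := by
  have hcs : HasCompactSupport K := .of_support_subset_isCompact isCompact_Icc hKs
  have hKmul : ∀ g : ℝ → ℝ, Continuous g → Integrable fun u => K u * g u :=
    fun g hg => (hKc.mul hg).integrable_of_hasCompactSupport hcs.mul_right
  have hKint : Integrable K := hKc.integrable_of_hasCompactSupport hcs
  have hKabs : 1 ≤ ∫ u, |K u| := by
    simpa [h0] using abs_integral_le_integral_abs (f := K) (μ := volume)
  refine ⟨(∫ u, |K u|) / (p + 1)!, by positivity, fun η hη f M hf hM t => ?_⟩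
  set P : ℝ → ℝ := fun u => taylorWithinEval f p univ t (t - η * u)
  have hKP : ∫ u, K u * P u = f t := by
    simp only [P, taylorWithinEval_univ_sub_mul]
    rw [integral_mul_sum_pow_eq_of_moments (fun k => hKmul _ (continuous_pow k)) h0 hmom]
    simp
  have hfc : Continuous fun u => f (t - η * u) := hf.continuous.comp (by fun_prop)
  have hPc : Continuous P := by simp only [P, taylorWithinEval_univ_sub_mul]; fun_prop
  have hrem : ∀ u ∈ Icc (-1 : ℝ) 1, |f (t - η * u) - P u| ≤ M * η ^ (p + 1) / (p + 1)! := by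
    intro u hu
    refine (abs_sub_taylorWithinEval_univ_le hf hM t _).trans ?_
    have hdist : |t - η * u - t| ≤ η := by
      rw [show t - η * u - t = -(η * u) by ring, abs_neg, abs_mul, abs_of_pos hη]
      exact mul_le_of_le_one_right hη.le (abs_le.mpr hu)
    have hM0 : 0 ≤ M := (abs_nonneg _).trans (hM 0)
    gcongr
  rw [integral_scaled_kernel_mul_eq hη, ← hKP, ← integral_sub (hKmul _ hfc) (hKmul _ hPc)]
  simp_rw [← mul_sub]
  calc |∫ u, K u * (f (t - η * u) - P u)|
      ≤ (∫ u, |K u|) * (M * η ^ (p + 1) / (p + 1)!) :=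
        abs_integral_mul_le_of_support_subset hKint hKs hrem
    _ = (∫ u, |K u|) / (p + 1)! * M * η ^ (p + 1) := by ring
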